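/- arXiv:1211.6016 — 10 statements merged into one kernel-verified Lean document; each statement's English description precedes it below -/
import Mathlib

section
/- Let G be a finite group in which every nonidentity element has order at least p (for a prime p). Then G cannot be covered by p proper subgroups: if G = H₁ ∪ ⋯ ∪ Hₚ with each Hᵢ a subgroup, then some Hᵢ = G. -/
theorem no_cover_by_p_proper_subgroups_of_min_order
    {G : Type*} [Group G] [Fintype G] (p : ℕ) (hp : p.Prime)
    (horder : ∀ g : G, g ≠ 1 → p ≤ orderOf g)
    (H : Fin p → Subgroup G)
    (hcover : (⋃ i, (H i : Set G)) = Set.univ) :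
    ∃ i, H i = ⊤ := by
  classical
  by_contra h
  push_neg at h
  have hp2 : 2 ≤ p := hp.two_le
  set n := Fintype.card G with hn
  have hG : Nontrivial G := by
    by_contra hG
    rw [not_nontrivial_iff_subsingleton] at hG
    exact h ⟨0, hp.pos⟩ (Subsingleton.elim _ _)
  have hn2 : 2 ≤ n := Fintype.one_lt_card
  -- each proper subgroup has p * card ≤ n
  have key : ∀ i, p * Nat.card (H i) ≤ n := by
    intro i
    have hidx1 : (H i).index ≠ 1 := by
      simpa [Subgroup.index_eq_one] using h i
    have hq : (H i).index.minFac.Prime := Nat.minFac_prime hidx1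
    have hdvd : (H i).index.minFac ∣ n := by
      have h1 : (H i).index ∣ Nat.card G := Subgroup.index_dvd_card (H := H i)
      have := (Nat.minFac_dvd _).trans h1
      simpa [Nat.card_eq_fintype_card, hn] using this
    have : Fact (H i).index.minFac.Prime := ⟨hq⟩
    obtain ⟨g, hg⟩ := exists_prime_orderOf_dvd_card (H i).index.minFac
      (by rwa [hn] at hdvd)
    have hg1 : g ≠ 1 := by
      intro hg1
      rw [hg1, orderOf_one] at hg
      exact hq.one_lt.ne' hg.symm
    have hple : p ≤ (H i).index.minFac := hg ▸ horder g hg1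
    have hle : p ≤ (H i).index := hple.trans (Nat.minFac_le (Nat.pos_of_ne_zero
      (Subgroup.index_ne_zero_of_finite)))
    calc p * Nat.card (H i) ≤ (H i).index * Nat.card (H i) :=
          Nat.mul_le_mul_right _ hle
      _ = Nat.card G := Subgroup.index_mul_card (H i)
      _ = n := by rw [Nat.card_eq_fintype_card]
  -- counting
  let m : Fin p → ℕ := fun i => Nat.card (H i)
  let T : Fin p → Finset G := fun i => (H i : Set G).toFinset.erase 1
  have hTcard : ∀ i, (T i).card = m i - 1 := by
    intro i
    rw [Finset.card_erase_of_mem (Set.mem_toFinset.mpr (H i).one_mem),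
      Set.toFinset_card]
    congr 1
    rw [← Nat.card_eq_fintype_card]
    rfl
  have hm1 : ∀ i, 1 ≤ m i := fun i => Nat.card_pos
  have hsub : Finset.univ.erase (1 : G) ⊆ Finset.univ.biUnion T := by
    intro x hx
    have hx1 : x ≠ 1 := Finset.ne_of_mem_erase hx
    have hxU : x ∈ ⋃ i, (H i : Set G) := by rw [hcover]; trivial
    obtain ⟨i, hi⟩ := Set.mem_iUnion.mp hxU
    exact Finset.mem_biUnion.mpr ⟨i, Finset.mem_univ i,
      Finset.mem_erase.mpr ⟨hx1, Set.mem_toFinset.mpr hi⟩⟩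
  have hcard1 : n - 1 ≤ ∑ i, (m i - 1) := by
    calc n - 1 = (Finset.univ.erase (1 : G)).card := by
          rw [Finset.card_erase_of_mem (Finset.mem_univ 1), Finset.card_univ]
      _ ≤ (Finset.univ.biUnion T).card := Finset.card_le_card hsub
      _ ≤ ∑ i, (T i).card := Finset.card_biUnion_le
      _ = ∑ i, (m i - 1) := by simp [hTcard]
  have hsum_eq : ∑ i, (m i - 1) + p = ∑ i, m i := by
    have : ∑ i, (m i - 1) + ∑ _i : Fin p, 1 = ∑ i, m i := by
      rw [← Finset.sum_add_distrib]
      exact Finset.sum_congr rfl fun i _ => Nat.sub_add_cancel (hm1 i)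
    simpa using this
  have hsum_le : p * (∑ i, m i) ≤ p * n := by
    rw [Finset.mul_sum]
    calc ∑ i, p * m i ≤ ∑ _i : Fin p, n := Finset.sum_le_sum fun i _ => key i
      _ = p * n := by simp [Nat.mul_comm]
  have hsum_le' : ∑ i, m i ≤ n := Nat.le_of_mul_le_mul_left hsum_le hp.pos
  omega
end

section
/- For a prime p, the group ℤ/p × ℤ/p cannot be covered by p proper subgroups, but it can be covered by p + 1 proper subgroups. -/
theorem zmod_p_sq_cover_number (p : ℕ) (hp : p.Prime) :
    (∃ H : Fin (p + 1) → AddSubgroup (ZMod p × ZMod p),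
      (∀ i, H i ≠ ⊤) ∧ (⋃ i, (H i : Set (ZMod p × ZMod p))) = Set.univ) ∧
    ¬ ∃ H : Fin p → AddSubgroup (ZMod p × ZMod p),
      (∀ i, H i ≠ ⊤) ∧ (⋃ i, (H i : Set (ZMod p × ZMod p))) = Set.univ := by
  haveI : Fact p.Prime := ⟨hp⟩
  haveI : NeZero p := ⟨hp.ne_zero⟩
  haveI : Fact (1 < p) := ⟨hp.one_lt⟩
  constructor
  · refine ⟨fun i => if h : (i : ℕ) < p then
        AddSubgroup.zmultiples ((1, ((i : ℕ) : ZMod p)) : ZMod p × ZMod p)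
      else AddSubgroup.zmultiples ((0, 1) : ZMod p × ZMod p), ?_, ?_⟩
    · intro i
      by_cases h : (i : ℕ) < p
      · simp only [dif_pos h]
        intro htop
        have hmem : ((0, 1) : ZMod p × ZMod p) ∈
            AddSubgroup.zmultiples ((1, ((i : ℕ) : ZMod p)) : ZMod p × ZMod p) := by
          rw [htop]; exact AddSubgroup.mem_top _
        obtain ⟨n, hn⟩ := AddSubgroup.mem_zmultiples_iff.mp hmem
        have h1 : (n : ZMod p) = 0 := by
          have := congrArg Prod.fst hn
          simpa [zsmul_eq_mul] using this
        have h2 : (n : ZMod p) * ((i : ℕ) : ZMod p) = 1 := by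
          have := congrArg Prod.snd hn
          simpa [zsmul_eq_mul] using this
        rw [h1, zero_mul] at h2
        exact zero_ne_one h2
      · simp only [dif_neg h]
        intro htop
        have hmem : ((1, 0) : ZMod p × ZMod p) ∈
            AddSubgroup.zmultiples ((0, 1) : ZMod p × ZMod p) := by
          rw [htop]; exact AddSubgroup.mem_top _
        obtain ⟨n, hn⟩ := AddSubgroup.mem_zmultiples_iff.mp hmem
        have := congrArg Prod.fst hn
        simp [zsmul_eq_mul] at this
    · ext x
      obtain ⟨a, b⟩ := x
      simp only [Set.mem_iUnion, Set.mem_univ, iff_true, SetLike.mem_coe]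
      by_cases ha : a = 0
      · refine ⟨Fin.last p, ?_⟩
        simp only [Fin.val_last, lt_irrefl, dif_neg, not_false_iff]
        refine ⟨(b.val : ℤ), ?_⟩
        have : ((b.val : ℤ) : ZMod p) = b := by
          push_cast
          simp [ZMod.natCast_val, ZMod.cast_id]
        simp [zsmul_eq_mul, Prod.ext_iff, ha, this]
      · set c : ZMod p := b * a⁻¹ with hc
        refine ⟨⟨c.val, lt_trans c.val_lt (Nat.lt_succ_self p)⟩, ?_⟩
        simp only [dif_pos c.val_lt]
        refine ⟨(a.val : ℤ), ?_⟩
        have hca : ((c.val : ℤ) : ZMod p) = c := by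
          push_cast
          simp [ZMod.natCast_val, ZMod.cast_id]
        have haa : ((a.val : ℤ) : ZMod p) = a := by
          push_cast
          simp [ZMod.natCast_val, ZMod.cast_id]
        have : a * c = b := by
          rw [hc, mul_comm b a⁻¹, ← mul_assoc, mul_inv_cancel₀ ha, one_mul]
        simp [zsmul_eq_mul, Prod.ext_iff, hca, haa, this]
  · rintro ⟨H, hne, hcov⟩
    have hcardG : Nat.card (ZMod p × ZMod p) = p ^ 2 := by
      simp [Nat.card_prod, Nat.card_zmod, sq]
    have hcard : ∀ i, Nat.card (H i) ≤ p := by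
      intro i
      have hd : Nat.card (H i) ∣ p ^ 2 := by
        rw [← hcardG]; exact AddSubgroup.card_addSubgroup_dvd_card (H i)
      obtain ⟨k, hk, hke⟩ := (Nat.dvd_prime_pow hp).mp hd
      have hne2 : Nat.card (H i) ≠ p ^ 2 := by
        intro h
        exact hne i (AddSubgroup.eq_top_of_card_eq (H i) (h.trans hcardG.symm))
      interval_cases k
      · simp [hke]; exact hp.one_lt.le
      · rw [hke, pow_one]
      · exact absurd hke hne2
    classical
    set T : Fin p → Finset (ZMod p × ZMod p) :=
      fun i => (H i : Set (ZMod p × ZMod p)).toFinset.erase 0 with hT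
    have hsub : (Finset.univ : Finset (ZMod p × ZMod p)) ⊆
        insert 0 (Finset.univ.biUnion T) := by
      intro x _
      have hx : x ∈ ⋃ i, (H i : Set (ZMod p × ZMod p)) := by
        rw [hcov]; exact Set.mem_univ x
      obtain ⟨i, hi⟩ := Set.mem_iUnion.mp hx
      by_cases hx0 : x = 0
      · simp [hx0]
      · exact Finset.mem_insert_of_mem (Finset.mem_biUnion.mpr
          ⟨i, Finset.mem_univ i, Finset.mem_erase.mpr ⟨hx0, Set.mem_toFinset.mpr hi⟩⟩)
    have hTcard : ∀ i, (T i).card ≤ p - 1 := by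
      intro i
      have h0 : (0 : ZMod p × ZMod p) ∈ (H i : Set (ZMod p × ZMod p)).toFinset :=
        Set.mem_toFinset.mpr (H i).zero_mem
      rw [hT]
      rw [Finset.card_erase_of_mem h0]
      have : (H i : Set (ZMod p × ZMod p)).toFinset.card = Nat.card (H i) := by
        rw [Set.toFinset_card, Nat.card_eq_fintype_card]
        exact Fintype.card_congr (Equiv.refl _)
      rw [this]
      exact Nat.sub_le_sub_right (hcard i) 1
    have hbound : Fintype.card (ZMod p × ZMod p) ≤ 1 + p * (p - 1) := by
      calc Fintype.card (ZMod p × ZMod p)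
          = (Finset.univ : Finset (ZMod p × ZMod p)).card := rfl
        _ ≤ (insert 0 (Finset.univ.biUnion T)).card := Finset.card_le_card hsub
        _ ≤ 1 + (Finset.univ.biUnion T).card := by
            rw [add_comm]; exact Finset.card_insert_le _ _
        _ ≤ 1 + ∑ i, (T i).card := by
            exact Nat.add_le_add_left (Finset.card_biUnion_le) 1
        _ ≤ 1 + ∑ _i : Fin p, (p - 1) := by
            exact Nat.add_le_add_left (Finset.sum_le_sum fun i _ => hTcard i) 1
        _ = 1 + p * (p - 1) := by simp [Finset.sum_const, mul_comm]
    have hfc : Fintype.card (ZMod p × ZMod p) = p ^ 2 := by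
      simp [ZMod.card, sq]
    rw [hfc] at hbound
    obtain ⟨q, rfl⟩ : ∃ q, p = q + 1 := ⟨p - 1, (Nat.succ_pred_eq_of_pos hp.pos).symm⟩
    have h2 := hp.two_le
    simp only [Nat.add_sub_cancel] at hbound
    nlinarith [hbound, h2]
end

section
/- If G = H₁ ∪ ⋯ ∪ Hₖ is an irredundant cover of a group G by subgroups (i.e., no proper subfamily covers G) with k ≥ 2, then each Hᵢ is a proper subgroup of finite index in G. -/
open scoped Pointwise

theorem neumann_irredundant_cover_finite_index
    {G : Type*} [Group G] (k : ℕ) (hk : 2 ≤ k)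
    (H : Fin k → Subgroup G)
    (hcover : (⋃ i, (H i : Set G)) = Set.univ)
    (hirr : ∀ J : Finset (Fin k), J ≠ Finset.univ →
      (⋃ i ∈ J, (H i : Set G)) ≠ Set.univ) :
    ∀ i, H i ≠ ⊤ ∧ (H i).index ≠ 0 := by
  classical
  have hcovers : ⋃ i ∈ (Finset.univ : Finset (Fin k)), (1 : G) • (H i : Set G) = Set.univ := by
    simpa using hcover
  intro i
  constructor
  · intro htop
    apply hirr {i}
    · intro h
      have : Finset.card ({i} : Finset (Fin k)) = Finset.card (Finset.univ : Finset (Fin k)) := by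
        rw [h]
      simp [Finset.card_univ] at this
      omega
    · simp [htop]
  · intro hidx
    have hfin := Subgroup.leftCoset_cover_filter_FiniteIndex hcovers
    have hne : (Finset.univ.filter (fun j => (H j).FiniteIndex)) ≠ Finset.univ := by
      intro h
      have : (H i).FiniteIndex := by
        have := Finset.mem_filter.mp (h ▸ Finset.mem_univ i)
        exact this.2
      exact this.index_ne_zero hidx
    apply hirr _ hne
    simpa using hfin
end

section
/- A group G can be covered by finitely many proper subgroups if and only if G has a finite noncyclic quotient. -/
open scoped Pointwise

theorem coverable_iff_finite_noncyclic_quotient {G : Type*} [Group G] :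
    (∃ (k : ℕ) (H : Fin k → Subgroup G),
      (∀ i, H i ≠ ⊤) ∧ (⋃ i, (H i : Set G)) = Set.univ) ↔
    (∃ (N : Subgroup G) (hN : N.Normal), N.index ≠ 0 ∧
      (letI := hN; ¬ IsCyclic (G ⧸ N))) := by
  classical
  constructor
  · rintro ⟨k, H, hne, hcov⟩
    -- rewrite cover as a coset cover over Finset.univ
    have hcov' : ⋃ i ∈ (Finset.univ : Finset (Fin k)),
        (1 : G) • ((H i : Set G)) = Set.univ := by
      simpa using hcov
    have hfilt := Subgroup.leftCoset_cover_filter_FiniteIndex hcov'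
    set t : Finset (Fin k) :=
      (Finset.univ : Finset (Fin k)).filter (fun i => (H i).FiniteIndex) with ht
    have hfilt' : ⋃ i ∈ t, ((H i : Set G)) = Set.univ := by
      simpa using hfilt
    set N : Subgroup G := ⨅ i ∈ t, (H i).normalCore with hN
    have hNnormal : N.Normal := by
      constructor
      intro n hn g
      simp only [hN, Subgroup.mem_iInf] at hn ⊢
      intro i hi
      exact ((H i).normalCore_normal).conj_mem _ (hn i hi) g
    have hNle : ∀ i ∈ t, N ≤ H i := by
      intro i hi
      refine le_trans ?_ ((H i).normalCore_le)
      exact le_trans (iInf_le _ i) (iInf_le _ hi)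
    have hfin : N.FiniteIndex := by
      refine Subgroup.finiteIndex_iInf' _ ?_
      intro i hi
      have : (H i).FiniteIndex := by
        simpa [ht] using (Finset.mem_filter.mp hi).2
      exact @Subgroup.finiteIndex_normalCore _ _ (H i) this
    refine ⟨N, hNnormal, ?_, ?_⟩
    · exact hfin.index_ne_zero
    intro hcyc
    obtain ⟨x, hx⟩ := hcyc.exists_generator
    obtain ⟨g, rfl⟩ := QuotientGroup.mk_surjective x
    have hg : g ∈ ⋃ i ∈ t, ((H i : Set G)) := hfilt' ▸ Set.mem_univ g
    simp only [Set.mem_iUnion] at hg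
    obtain ⟨i, hi, hgi⟩ := hg
    apply hne i
    rw [eq_top_iff]
    intro y _
    obtain ⟨n, hn⟩ := hx (QuotientGroup.mk y)
    have hn' : QuotientGroup.mk (g ^ n) = (QuotientGroup.mk y : G ⧸ N) := by
      simpa using hn
    have : (g ^ n)⁻¹ * y ∈ N := QuotientGroup.eq.mp hn'
    have hyN : (g ^ n)⁻¹ * y ∈ H i := hNle i hi this
    have : g ^ n * ((g ^ n)⁻¹ * y) ∈ H i :=
      (H i).mul_mem (Subgroup.zpow_mem _ hgi n) hyN
    simpa using this
  · rintro ⟨N, hN, hind, hncyc⟩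
    haveI := hN
    haveI : N.FiniteIndex := ⟨hind⟩
    haveI : Finite (G ⧸ N) := N.finite_quotient_of_finiteIndex
    haveI : Fintype (G ⧸ N) := Fintype.ofFinite _
    obtain ⟨e⟩ : Nonempty (Fin (Fintype.card (G ⧸ N)) ≃ (G ⧸ N)) :=
      ⟨(Fintype.equivFin (G ⧸ N)).symm⟩
    refine ⟨Fintype.card (G ⧸ N),
      fun i => (Subgroup.zpowers (e i)).comap (QuotientGroup.mk' N), ?_, ?_⟩
    · intro i h
      have hsurj := QuotientGroup.mk'_surjective N
      have : Subgroup.zpowers (e i) = ⊤ := by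
        have := Subgroup.comap_injective (f := QuotientGroup.mk' N) hsurj
        apply this
        rw [Subgroup.comap_top]
        exact h
      exact hncyc ⟨⟨e i, by
        intro x
        have : x ∈ Subgroup.zpowers (e i) := this ▸ Subgroup.mem_top x
        exact this⟩⟩
    · ext g
      simp only [Set.mem_iUnion, Set.mem_univ, iff_true]
      refine ⟨e.symm (QuotientGroup.mk g), ?_⟩
      show QuotientGroup.mk' N g ∈ Subgroup.zpowers (e (e.symm _))
      rw [Equiv.apply_symm_apply]
      exact Subgroup.mem_zpowers _
end

section
/- A group G is the union of three proper subgroups if and only if G has a quotient isomorphic to the Klein four-group ℤ/2 × ℤ/2 (Scorza's theorem). -/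
private lemma scorza_two {G : Type*} [Group G] {A B : Subgroup G}
    (h : ∀ g : G, g ∈ A ∨ g ∈ B) : A = ⊤ ∨ B = ⊤ := by
  by_cases hAB : (A : Set G) ⊆ B
  · right; ext g; simp only [Subgroup.mem_top, iff_true]
    rcases h g with hg | hg
    · exact hAB hg
    · exact hg
  · left
    obtain ⟨a, haA, haB⟩ := Set.not_subset.1 hAB
    ext g; simp only [Subgroup.mem_top, iff_true]
    rcases h g with hg | hg
    · exact hg
    · rcases h (a * g) with h' | h'
      · exact (mul_mem_cancel_left haA).1 h'
      · exact absurd ((mul_mem_cancel_right hg).1 h') haB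

private lemma scorza_inter {G : Type*} [Group G] {A B C : Subgroup G}
    (cover : ∀ g : G, g ∈ A ∨ g ∈ B ∨ g ∈ C)
    {a : G} (haA : a ∈ A) (haB : a ∉ B) (haC : a ∉ C)
    {g : G} (hgB : g ∈ B) (hgC : g ∈ C) : g ∈ A := by
  rcases cover (a * g) with h | h | h
  · exact (mul_mem_cancel_left haA).1 h
  · exact absurd ((mul_mem_cancel_right hgB).1 h) haB
  · exact absurd ((mul_mem_cancel_right hgC).1 h) haC

private lemma scorza_key {G : Type*} [Group G] {A B C : Subgroup G}
    (cover : ∀ g : G, g ∈ A ∨ g ∈ B ∨ g ∈ C)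
    {x y : G} (hxA : x ∈ A) (hxB : x ∉ B) (hxC : x ∉ C)
    (hyA : y ∉ A) (hyB : y ∈ B) (hyC : y ∉ C)
    {u v : G} (hu : u ∉ A) (hv : v ∉ A) : u * v ∈ A := by
  have hBC : ∀ {g : G}, g ∈ B → g ∈ C → g ∈ A := fun hg hg' =>
    scorza_inter cover hxA hxB hxC hg hg'
  have hAC : ∀ {g : G}, g ∈ A → g ∈ C → g ∈ B := by
    intro g hg hg'
    refine scorza_inter (A := B) (B := A) (C := C) ?_ hyB hyA hyC hg hg'
    intro t; rcases cover t with h | h | h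
    · exact Or.inr (Or.inl h)
    · exact Or.inl h
    · exact Or.inr (Or.inr h)
  rcases (cover u).resolve_left hu with huB | huC
  · have huC : u ∉ C := fun h => hu (hBC huB h)
    rcases (cover v).resolve_left hv with hvB | hvC
    · -- both in B \ A
      have h1 : u * x ∈ C := by
        rcases cover (u * x) with h | h | h
        · exact absurd ((mul_mem_cancel_right hxA).1 h) hu
        · exact absurd ((mul_mem_cancel_left huB).1 h) hxB
        · exact h
      have h2 : x⁻¹ * v ∈ C := by
        rcases cover (x⁻¹ * v) with h | h | h
        · exact absurd ((mul_mem_cancel_left (inv_mem hxA)).1 h) hv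
        · exact absurd ((Subgroup.inv_mem_iff B).1 ((mul_mem_cancel_right hvB).1 h)) hxB
        · exact h
      have huvC : u * v ∈ C := by
        have h3 := mul_mem h1 h2
        rwa [mul_assoc, ← mul_assoc x, mul_inv_cancel, one_mul] at h3
      exact hBC (mul_mem huB hvB) huvC
    · have hvB : v ∉ B := fun h => hv (hBC h hvC)
      rcases cover (u * v) with h | h | h
      · exact h
      · exact absurd ((mul_mem_cancel_left huB).1 h) hvB
      · exact absurd ((mul_mem_cancel_right hvC).1 h) huC
  · have huB : u ∉ B := fun h => hu (hBC h huC)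
    rcases (cover v).resolve_left hv with hvB | hvC
    · have hvC : v ∉ C := fun h => hv (hBC hvB h)
      rcases cover (u * v) with h | h | h
      · exact h
      · exact absurd ((mul_mem_cancel_right hvB).1 h) huB
      · exact absurd ((mul_mem_cancel_left huC).1 h) hvC
    · have hvB : v ∉ B := fun h => hv (hBC h hvC)
      have h1 : u * y ∈ A := by
        rcases cover (u * y) with h | h | h
        · exact h
        · exact absurd ((mul_mem_cancel_right hyB).1 h) huB
        · exact absurd ((mul_mem_cancel_left huC).1 h) hyC
      have h2 : y⁻¹ * v ∈ A := by
        rcases cover (y⁻¹ * v) with h | h | h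
        · exact h
        · exact absurd ((mul_mem_cancel_left (inv_mem hyB)).1 h) hvB
        · exact absurd ((Subgroup.inv_mem_iff C).1 ((mul_mem_cancel_right hvC).1 h)) hyC
      have h3 := mul_mem h1 h2
      rwa [mul_assoc, ← mul_assoc y, mul_inv_cancel, one_mul] at h3

theorem scorza {G : Type*} [Group G] :
    (∃ H₁ H₂ H₃ : Subgroup G, H₁ ≠ ⊤ ∧ H₂ ≠ ⊤ ∧ H₃ ≠ ⊤ ∧
      (↑H₁ ∪ ↑H₂ ∪ ↑H₃ : Set G) = Set.univ) ↔
    (∃ (N : Subgroup G) (hN : N.Normal),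
      letI := hN
      Nonempty ((G ⧸ N) ≃* Multiplicative (ZMod 2 × ZMod 2))) := by
  classical
  constructor
  · rintro ⟨H₁, H₂, H₃, h1, h2, h3, hU⟩
    have cover : ∀ g : G, g ∈ H₁ ∨ g ∈ H₂ ∨ g ∈ H₃ := by
      intro g
      have : g ∈ (↑H₁ ∪ ↑H₂ ∪ ↑H₃ : Set G) := hU ▸ Set.mem_univ g
      simpa [Set.mem_union, or_assoc] using this
    -- a point only in H₁
    obtain ⟨x, hxB, hxC⟩ : ∃ x, x ∉ H₂ ∧ x ∉ H₃ := by
      by_contra h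
      push_neg at h
      rcases scorza_two (A := H₂) (B := H₃) (fun g => by
        by_cases hg : g ∈ H₂
        · exact Or.inl hg
        · exact Or.inr (h g hg)) with h' | h'
      · exact h2 h'
      · exact h3 h'
    have hxA : x ∈ H₁ := ((cover x).resolve_right (by tauto))
    -- a point only in H₂
    obtain ⟨y, hyA, hyC⟩ : ∃ y, y ∉ H₁ ∧ y ∉ H₃ := by
      by_contra h
      push_neg at h
      rcases scorza_two (A := H₁) (B := H₃) (fun g => by
        by_cases hg : g ∈ H₁
        · exact Or.inl hg
        · exact Or.inr (h g hg)) with h' | h'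
      · exact h1 h'
      · exact h3 h'
    have hyB : y ∈ H₂ := by
      rcases cover y with h | h | h
      · exact absurd h hyA
      · exact h
      · exact absurd h hyC
    have keyA : ∀ {u v : G}, u ∉ H₁ → v ∉ H₁ → u * v ∈ H₁ :=
      fun hu hv => scorza_key cover hxA hxB hxC hyA hyB hyC hu hv
    have keyB : ∀ {u v : G}, u ∉ H₂ → v ∉ H₂ → u * v ∈ H₂ := by
      intro u v hu hv
      refine scorza_key (A := H₂) (B := H₁) (C := H₃) ?_ hyB hyA hyC hxB hxA hxC hu hv
      intro t; rcases cover t with h | h | h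
      · exact Or.inr (Or.inl h)
      · exact Or.inl h
      · exact Or.inr (Or.inr h)
    set f : G →* Multiplicative (ZMod 2 × ZMod 2) :=
      { toFun := fun g => Multiplicative.ofAdd
          ((if g ∈ H₁ then 0 else 1), (if g ∈ H₂ then 0 else 1))
        map_one' := by simp [one_mem]
        map_mul' := by
          intro u v
          have e1 : (if u * v ∈ H₁ then (0 : ZMod 2) else 1) =
              (if u ∈ H₁ then 0 else 1) + (if v ∈ H₁ then 0 else 1) := by
            by_cases hu : u ∈ H₁ <;> by_cases hv : v ∈ H₁
            · simp [hu, hv, mul_mem hu hv]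
            · have : u * v ∉ H₁ := fun h => hv ((mul_mem_cancel_left hu).1 h)
              simp [hu, hv, this]
            · have : u * v ∉ H₁ := fun h => hu ((mul_mem_cancel_right hv).1 h)
              simp [hu, hv, this]
            · have : u * v ∈ H₁ := keyA hu hv
              simp [hu, hv, this]
              decide
          have e2 : (if u * v ∈ H₂ then (0 : ZMod 2) else 1) =
              (if u ∈ H₂ then 0 else 1) + (if v ∈ H₂ then 0 else 1) := by
            by_cases hu : u ∈ H₂ <;> by_cases hv : v ∈ H₂
            · simp [hu, hv, mul_mem hu hv]
            · have : u * v ∉ H₂ := fun h => hv ((mul_mem_cancel_left hu).1 h)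
              simp [hu, hv, this]
            · have : u * v ∉ H₂ := fun h => hu ((mul_mem_cancel_right hv).1 h)
              simp [hu, hv, this]
            · have : u * v ∈ H₂ := keyB hu hv
              simp [hu, hv, this]
              decide
          simp only [← ofAdd_add, Prod.mk_add_mk, e1, e2] }
    have hsurj : Function.Surjective f := by
      intro k
      have hz : ∀ z : ZMod 2, z = 0 ∨ z = 1 := by decide
      have hk : k = Multiplicative.ofAdd
          ((Multiplicative.toAdd k).1, (Multiplicative.toAdd k).2) := rfl
      have hxy1 : x * y ∉ H₁ := fun h => hyA ((mul_mem_cancel_left hxA).1 h)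
      have hxy2 : x * y ∉ H₂ := fun h => hxB ((mul_mem_cancel_right hyB).1 h)
      rcases hz (Multiplicative.toAdd k).1 with h' | h' <;>
        rcases hz (Multiplicative.toAdd k).2 with h'' | h''
      · exact ⟨1, by rw [hk, h', h'']; simp [f, one_mem]⟩
      · exact ⟨x, by rw [hk, h', h'']; simp [f, hxA, hxB]⟩
      · exact ⟨y, by rw [hk, h', h'']; simp [f, hyA, hyB]⟩
      · exact ⟨x * y, by rw [hk, h', h'']; simp [f, hxy1, hxy2]⟩
    exact ⟨f.ker, MonoidHom.normal_ker f,
      ⟨QuotientGroup.quotientKerEquivOfSurjective f hsurj⟩⟩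
  · rintro ⟨N, hN, he⟩
    haveI := hN
    obtain ⟨e⟩ := he
    set ψ : G →* Multiplicative (ZMod 2 × ZMod 2) :=
      e.toMonoidHom.comp (QuotientGroup.mk' N) with hψ
    have hψs : Function.Surjective ψ :=
      e.surjective.comp (QuotientGroup.mk'_surjective N)
    set p1 : Multiplicative (ZMod 2 × ZMod 2) →* Multiplicative (ZMod 2) :=
      (AddMonoidHom.fst (ZMod 2) (ZMod 2)).toMultiplicative
    set p2 : Multiplicative (ZMod 2 × ZMod 2) →* Multiplicative (ZMod 2) :=
      (AddMonoidHom.snd (ZMod 2) (ZMod 2)).toMultiplicative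
    set p3 : Multiplicative (ZMod 2 × ZMod 2) →* Multiplicative (ZMod 2) :=
      (AddMonoidHom.fst (ZMod 2) (ZMod 2) + AddMonoidHom.snd (ZMod 2) (ZMod 2)).toMultiplicative
    refine ⟨(p1.comp ψ).ker, (p2.comp ψ).ker, (p3.comp ψ).ker, ?_, ?_, ?_, ?_⟩
    · intro h
      obtain ⟨g, hg⟩ := hψs (Multiplicative.ofAdd (1, 0))
      have : g ∈ (p1.comp ψ).ker := h ▸ Subgroup.mem_top g
      rw [MonoidHom.mem_ker, MonoidHom.comp_apply, hg] at this
      exact absurd this (by decide)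
    · intro h
      obtain ⟨g, hg⟩ := hψs (Multiplicative.ofAdd (0, 1))
      have : g ∈ (p2.comp ψ).ker := h ▸ Subgroup.mem_top g
      rw [MonoidHom.mem_ker, MonoidHom.comp_apply, hg] at this
      exact absurd this (by decide)
    · intro h
      obtain ⟨g, hg⟩ := hψs (Multiplicative.ofAdd (1, 0))
      have : g ∈ (p3.comp ψ).ker := h ▸ Subgroup.mem_top g
      rw [MonoidHom.mem_ker, MonoidHom.comp_apply, hg] at this
      exact absurd this (by decide)
    · apply Set.eq_univ_iff_forall.2
      intro g
      have key : ∀ m : Multiplicative (ZMod 2 × ZMod 2),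
          p1 m = 1 ∨ p2 m = 1 ∨ p3 m = 1 := by decide
      rcases key (ψ g) with h | h | h
      · exact Or.inl (Or.inl (by simpa [MonoidHom.mem_ker] using h))
      · exact Or.inl (Or.inr (by simpa [MonoidHom.mem_ker] using h))
      · exact Or.inr (by simpa [MonoidHom.mem_ker] using h)
end

section
/- Let G be a finite nilpotent group that can be covered by finitely many proper subgroups, and let p be the minimal prime such that ℤ/p × ℤ/p is a quotient of G. Then G can be covered by p + 1 proper subgroups but not by p proper subgroups. -/
/-!
A surjection `G ↠ (ℤ/p)²` pulls the `p + 1` lines of `(ℤ/p)²` back to a cover of `G`.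

Conversely, enlarge the members of a cover by at most `p` proper subgroups to maximal ones;
in a nilpotent group these are normal of prime index. By B. H. Neumann's bound
`∑ 1/[G:H] ≥ 1`, which is strict because all members contain `1`, some member `M` has index
`q` smaller than the size of the cover, so `q < p`. Then `M` is the only member of index `q`,
since two would give `G ↠ (ℤ/q)²`. A `q`-element `y ∉ M` lies in every other member, whose
index is a prime `≠ q`; so each `x ∈ M` lies in the member containing `x * y`, `M` can be
dropped, and induction on the size of the cover ends in a contradiction.
-/

open Finset
open scoped Pointwise

namespace Subgroup

variable {G : Type*} [Group G]

theorem index_prime_of_isCoatom [Finite G] {M : Subgroup G} [M.Normal] (hM : IsCoatom M) :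
    M.index.Prime := by
  rw [index_eq_card]
  have hq : (Nat.card (G ⧸ M)).minFac.Prime :=
    Nat.minFac_prime (index_eq_card M ▸ mt index_eq_one.mp hM.ne_top)
  have := Fact.mk hq
  obtain ⟨x, hx⟩ := exists_prime_orderOf_dvd_card' (G := G ⧸ M) _ (Nat.minFac_dvd _)
  have hle : M ≤ (zpowers x).comap (QuotientGroup.mk' M) := by
    simpa using (QuotientGroup.mk' M).ker_le_comap (zpowers x)
  rcases hM.le_iff.mp hle with htop | hbot
  · have hx_gen : zpowers x = ⊤ := by
      simpa [map_comap_eq_self_of_surjective (QuotientGroup.mk'_surjective M),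
        map_top_of_surjective _ (QuotientGroup.mk'_surjective M)]
        using congrArg (map (QuotientGroup.mk' M)) htop
    rwa [← card_top (G := G ⧸ M), ← hx_gen, Nat.card_zpowers, hx]
  · obtain ⟨g, rfl⟩ := QuotientGroup.mk'_surjective M x
    have hg : g ∈ M := hbot ▸ mem_zpowers _
    rw [QuotientGroup.mk'_apply, (QuotientGroup.eq_one_iff g).mpr hg, orderOf_one] at hx
    exact absurd hx.symm hq.ne_one

theorem surjective_prod_mk'_of_sup_eq_top {A B : Subgroup G} [A.Normal] [B.Normal]
    (h : A ⊔ B = ⊤) : Function.Surjective ((QuotientGroup.mk' A).prod (QuotientGroup.mk' B)) := by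
  rintro ⟨a', b'⟩
  obtain ⟨a, rfl⟩ := QuotientGroup.mk_surjective a'
  obtain ⟨b, rfl⟩ := QuotientGroup.mk_surjective b'
  obtain ⟨α, hα, β, hβ, hαβ⟩ := mem_sup_of_normal_right.mp (h ▸ mem_top (a⁻¹ * b))
  refine ⟨a * α, Prod.ext (QuotientGroup.eq.mpr ?_) (QuotientGroup.eq.mpr ?_)⟩
  · simpa using inv_mem hα
  · rwa [mul_inv_rev, mul_assoc, ← hαβ, inv_mul_cancel_left]

theorem exists_surjective_zmod_prod_of_isCoatom {q : ℕ} [Fact q.Prime] {A B : Subgroup G}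
    [A.Normal] [B.Normal] (hA : IsCoatom A) (hB : IsCoatom B) (hAB : A ≠ B) (hAq : A.index = q)
    (hBq : B.index = q) :
    ∃ φ : G →* Multiplicative (ZMod q × ZMod q), Function.Surjective φ := by
  have hZ : Nat.card (Multiplicative (ZMod q)) = q := by simp
  let e : (G ⧸ A) × (G ⧸ B) ≃* Multiplicative (ZMod q × ZMod q) :=
    ((mulEquivOfPrimeCardEq (hAq ▸ (index_eq_card A).symm) hZ).prodCongr
      (mulEquivOfPrimeCardEq (hBq ▸ (index_eq_card B).symm) hZ)).trans
      (MulEquiv.prodMultiplicative _ _).symm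
  exact ⟨e.toMonoidHom.comp _,
    e.surjective.comp (surjective_prod_mk'_of_sup_eq_top (hA.sup_eq_top_of_ne hB hAB))⟩

theorem mem_of_pow_prime_pow_eq_one {N : Subgroup G} [N.Normal] {q k : ℕ} (hq : q.Prime)
    (hN : N.index.Prime) (hNq : N.index ≠ q) {y : G} (hy : y ^ q ^ k = 1) : y ∈ N := by
  rw [← QuotientGroup.eq_one_iff]
  refine (pow_eq_one_iff_of_coprime
    (((Nat.coprime_primes hq hN).mpr hNq.symm).pow_left k)).mp ⟨?_, ?_⟩
  · rw [← QuotientGroup.mk_pow, hy, QuotientGroup.mk_one]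
  · rw [index_eq_card]
    exact pow_card_eq_one'

theorem exists_pow_prime_pow_eq_one_notMem [Finite G] {q : ℕ} (hq : q.Prime) {M : Subgroup G}
    (hM : q ∣ M.index) : ∃ y ∉ M, ∃ k, y ^ q ^ k = 1 := by
  have := Fact.mk hq
  obtain ⟨P⟩ : Nonempty (Sylow q G) := inferInstance
  obtain ⟨y, hyP, hyM⟩ := SetLike.not_le_iff_exists.mp fun hPM ↦
    P.not_dvd_index (hM.trans (index_dvd_of_le hPM))
  obtain ⟨k, hk⟩ := P.isPGroup' ⟨y, hyP⟩
  exact ⟨y, hyM, k, by simpa using congrArg Subtype.val hk⟩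

theorem exists_index_lt_card_of_covers [Finite G] {s : Finset (Subgroup G)} (htop : ⊤ ∉ s)
    (hcov : ∀ x, ∃ H ∈ s, x ∈ H) : ∃ H ∈ s, H.index < #s := by
  obtain ⟨A, hA, B, hB, hAB⟩ : s.Nontrivial := by
    obtain ⟨H, hH, -⟩ := hcov 1
    refine (Finset.Nonempty.exists_eq_singleton_or_nontrivial ⟨H, hH⟩).resolve_left ?_
    rintro ⟨K, rfl⟩
    refine htop (mem_singleton.mpr ((eq_top_iff' K).mpr fun x ↦ ?_).symm)
    obtain ⟨K', hK', hx⟩ := hcov x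
    rwa [mem_singleton.mp hK'] at hx
  by_contra! hindex
  have hcov' : ⋃ H ∈ s, (1 : G) • (H : Set G) = Set.univ := by
    simpa [Set.eq_univ_iff_forall] using hcov
  have hs : (0 : ℚ) < #s := by exact_mod_cast card_pos.mpr ⟨A, hA⟩
  -- Neumann's bound `1 ≤ ∑ 1/[G:H]` is attained, forcing the members of `s` to be disjoint.
  have hsum : ∑ H ∈ s, (H.index : ℚ)⁻¹ = 1 := by
    refine le_antisymm ?_ (one_le_sum_inv_index_of_leftCoset_cover (H := id) (g := 1) hcov')
    calc ∑ H ∈ s, (H.index : ℚ)⁻¹ ≤ ∑ _H ∈ s, (#s : ℚ)⁻¹ :=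
          sum_le_sum fun H hH ↦ inv_anti₀ hs (by exact_mod_cast hindex H hH)
      _ = 1 := by rw [sum_const, nsmul_eq_mul, mul_inv_cancel₀ hs.ne']
  classical
  have hdisj :=
    pairwiseDisjoint_leftCoset_cover_of_sum_inv_index_eq_one (H := id) (g := 1) hcov' hsum
  rw [filter_true_of_mem fun H _ ↦ finiteIndex_of_finite] at hdisj
  exact Set.disjoint_left.mp (hdisj hA hB hAB) (show (1 : G) ∈ _ by simp) (by simp)

theorem covers_erase_of_index_unique [Finite G] [DecidableEq (Subgroup G)]
    {s : Finset (Subgroup G)} (hnormal : ∀ N ∈ s, N.Normal) (hprime : ∀ N ∈ s, N.index.Prime)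
    {M : Subgroup G} (hM : M ∈ s) (huniq : ∀ N ∈ s, N.index = M.index → N = M)
    (hcov : ∀ x, ∃ N ∈ s, x ∈ N) :
    ∀ x, ∃ N ∈ s.erase M, x ∈ N := by
  obtain ⟨y, hyM, k, hy⟩ := exists_pow_prime_pow_eq_one_notMem (hprime M hM) dvd_rfl
  have hyN : ∀ N ∈ s.erase M, y ∈ N := fun N hN ↦
    have ⟨hNM, hNs⟩ := mem_erase.mp hN
    have := hnormal N hNs
    mem_of_pow_prime_pow_eq_one (hprime M hM) (hprime N hNs) (fun h ↦ hNM (huniq N hNs h)) hy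
  intro x
  by_cases hxM : x ∈ M
  · obtain ⟨N, hNs, hxyN⟩ := hcov (x * y)
    have hNM : N ≠ M := by
      rintro rfl
      exact hyM ((N.mul_mem_cancel_left hxM).mp hxyN)
    have hN : N ∈ s.erase M := mem_erase.mpr ⟨hNM, hNs⟩
    exact ⟨N, hN, (N.mul_mem_cancel_right (hyN N hN)).mp hxyN⟩
  · obtain ⟨N, hNs, hxN⟩ := hcov x
    exact ⟨N, mem_erase.mpr ⟨by rintro rfl; exact hxM hxN, hNs⟩, hxN⟩

theorem comap_cover_of_surjective {Q ι : Type*} [Group Q] {φ : G →* Q}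
    (hφ : Function.Surjective φ) {K : ι → Subgroup Q} (hK : ∀ i, K i ≠ ⊤)
    (hcov : ⋃ i, (K i : Set Q) = Set.univ) :
    (∀ i, (K i).comap φ ≠ ⊤) ∧ ⋃ i, ((K i).comap φ : Set G) = Set.univ := by
  refine ⟨fun i h ↦ hK i (comap_injective hφ (h.trans (comap_top φ).symm)), ?_⟩
  simp only [coe_comap, ← Set.preimage_iUnion, hcov, Set.preimage_univ]

end Subgroup

open Subgroup

section Nilpotent

variable {G : Type*} [Group G] [Finite G] [Group.IsNilpotent G] {p : ℕ}

theorem not_covers_of_isCoatom_of_card_le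
    (hmin : ∀ q : ℕ, q.Prime →
      (∃ φ : G →* Multiplicative (ZMod q × ZMod q), Function.Surjective φ) → p ≤ q)
    (s : Finset (Subgroup G)) (hs : ∀ M ∈ s, IsCoatom M) (hcard : #s ≤ p) :
    ¬ ∀ x, ∃ M ∈ s, x ∈ M := by
  classical
  induction s using Finset.strongInduction with
  | H s ih =>
  intro hcov
  have hnormal : ∀ M ∈ s, M.Normal := fun M hM ↦
    Group.normalizerCondition_of_isNilpotent.normal_of_coatom M (hs M hM)
  have hprime : ∀ M ∈ s, M.index.Prime := fun M hM ↦
    have := hnormal M hM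
    index_prime_of_isCoatom (hs M hM)
  obtain ⟨M, hMs, hM_lt⟩ :=
    exists_index_lt_card_of_covers (fun htop ↦ (hs ⊤ htop).ne_top rfl) hcov
  have huniq : ∀ N ∈ s, N.index = M.index → N = M := by
    intro N hNs hNM
    by_contra hne
    have := hnormal M hMs
    have := hnormal N hNs
    have := Fact.mk (hprime M hMs)
    have := hmin _ (hprime M hMs)
      (exists_surjective_zmod_prod_of_isCoatom (hs N hNs) (hs M hMs) hne hNM rfl)
    omega
  exact ih (s.erase M) (erase_ssubset hMs) (fun N hN ↦ hs N (mem_of_mem_erase hN))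
    (card_erase_le.trans hcard) (covers_erase_of_index_unique hnormal hprime hMs huniq hcov)

theorem iUnion_ne_univ_of_card_le
    (hmin : ∀ q : ℕ, q.Prime →
      (∃ φ : G →* Multiplicative (ZMod q × ZMod q), Function.Surjective φ) → p ≤ q)
    {ι : Type*} [Fintype ι] (hι : Fintype.card ι ≤ p) (H : ι → Subgroup G) (hH : ∀ i, H i ≠ ⊤) :
    ⋃ i, (H i : Set G) ≠ Set.univ := by
  intro hcov
  choose M hM hHM using fun i ↦ (eq_top_or_exists_le_coatom (H i)).resolve_left (hH i)
  classical
  refine not_covers_of_isCoatom_of_card_le hmin (univ.image M) (by simpa using hM)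
    (card_image_le.trans hι) fun x ↦ ?_
  obtain ⟨i, hi⟩ := Set.mem_iUnion.mp (hcov ▸ Set.mem_univ x)
  exact ⟨M i, mem_image_of_mem M (mem_univ i), hHM i hi⟩

end Nilpotent

section Lines

variable {K : Type*} [Field K]

/-- The `|K| + 1` lines through the origin of `K²`: `x = 0` for `none`, `y = c x` for `some c`. -/
def lineThroughOrigin : Option K → AddSubgroup (K × K)
  | none => (LinearMap.ker (LinearMap.fst K K K)).toAddSubgroup
  | some c => (LinearMap.ker (LinearMap.snd K K K - c • LinearMap.fst K K K)).toAddSubgroup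

theorem lineThroughOrigin_ne_top (c : Option K) : lineThroughOrigin c ≠ ⊤ := by
  rw [Ne, AddSubgroup.eq_top_iff', not_forall]
  cases c with
  | none => exact ⟨(1, 0), by simp [lineThroughOrigin]⟩
  | some c => exact ⟨(0, 1), by simp [lineThroughOrigin]⟩

theorem iUnion_lineThroughOrigin :
    ⋃ c : Option K, (lineThroughOrigin c : Set (K × K)) = Set.univ := by
  refine Set.eq_univ_of_forall fun ⟨x, y⟩ ↦ Set.mem_iUnion.mpr ?_
  by_cases hx : x = 0
  · exact ⟨none, by simp [lineThroughOrigin, hx]⟩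
  · exact ⟨some (y / x), by simp [lineThroughOrigin, hx]⟩

theorem exists_proper_cover_of_surjective {G : Type*} [Group G]
    {φ : G →* Multiplicative (K × K)} (hφ : Function.Surjective φ) :
    ∃ H : Option K → Subgroup G, (∀ c, H c ≠ ⊤) ∧ ⋃ c, (H c : Set G) = Set.univ :=
  ⟨_, comap_cover_of_surjective hφ (K := fun c ↦ (lineThroughOrigin c).toSubgroup)
    (fun c ↦ by simpa using lineThroughOrigin_ne_top c) iUnion_lineThroughOrigin⟩

end Lines

theorem nilpotent_cover_number_general
    {G : Type*} [Group G] [Fintype G] [Group.IsNilpotent G]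
    (p : ℕ) (hp : p.Prime)
    (hquot : ∃ φ : G →* Multiplicative (ZMod p × ZMod p), Function.Surjective φ)
    (hmin : ∀ q : ℕ, q.Prime →
      (∃ φ : G →* Multiplicative (ZMod q × ZMod q), Function.Surjective φ) → p ≤ q) :
    (∃ H : Fin (p + 1) → Subgroup G,
      (∀ i, H i ≠ ⊤) ∧ (⋃ i, (H i : Set G)) = Set.univ) ∧
    ¬ ∃ H : Fin p → Subgroup G,
      (∀ i, H i ≠ ⊤) ∧ (⋃ i, (H i : Set G)) = Set.univ := by
  have := Fact.mk hp
  obtain ⟨φ, hφ⟩ := hquot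
  refine ⟨?_, fun ⟨H, hH, hcov⟩ ↦ iUnion_ne_univ_of_card_le hmin (by simp) H hH hcov⟩
  obtain ⟨H, hH, hcov⟩ := exists_proper_cover_of_surjective hφ
  let e : Fin (p + 1) ≃ Option (ZMod p) := Fintype.equivOfCardEq (by simp)
  exact ⟨H ∘ e, fun i ↦ hH (e i), e.surjective.iUnion_comp (fun c ↦ (H c : Set G)) ▸ hcov⟩

theorem nilpotent_cover_number
    {G : Type*} [Group G] [Fintype G] [Group.IsNilpotent G]
    (hnc : ¬ IsCyclic G) (p : ℕ) (hp : p.Prime)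
    (hquot : ∃ φ : G →* Multiplicative (ZMod p × ZMod p), Function.Surjective φ)
    (hmin : ∀ q : ℕ, q.Prime →
      (∃ φ : G →* Multiplicative (ZMod q × ZMod q), Function.Surjective φ) → p ≤ q) :
    (∃ H : Fin (p + 1) → Subgroup G,
      (∀ i, H i ≠ ⊤) ∧ (⋃ i, (H i : Set G)) = Set.univ) ∧
    ¬ ∃ H : Fin p → Subgroup G,
      (∀ i, H i ≠ ⊤) ∧ (⋃ i, (H i : Set G)) = Set.univ :=
  nilpotent_cover_number_general p hp hquot hmin
end

section
/- Suppose N is a normal subgroup of a group G contained in the Frattini subgroup of G. Then G can be covered by k proper subgroups if and only if G/N can be covered by k proper subgroups. -/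
open scoped Pointwise

/-- A proper subgroup of finite index is contained in a maximal subgroup. -/
lemma exists_coatom_of_finiteIndex {G : Type*} [Group G] (H : Subgroup G)
    (hH : H ≠ ⊤) (hf : H.index ≠ 0) :
    ∃ M : Subgroup G, IsCoatom M ∧ H ≤ M := by
  classical
  set S : Set (Subgroup G) := {K | H ≤ K ∧ K ≠ ⊤} with hS
  have hmem : H ∈ S := ⟨le_rfl, hH⟩
  have hidx : ∀ K ∈ S, K.index ≠ 0 := fun K hK =>
    fun h0 => hf (Nat.eq_zero_of_zero_dvd (h0 ▸ Subgroup.index_dvd_of_le hK.1))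
  obtain ⟨M, hHM, hMmem, hMmax⟩ := zorn_le_nonempty₀ S
    (fun c hcs hc y hy => by
      -- choose an element of the chain of minimal index; it is an upper bound
      have hne : {n : ℕ | 0 < n ∧ ∃ K ∈ c, (K : Subgroup G).index = n}.Nonempty :=
        ⟨y.index, Nat.pos_of_ne_zero (hidx y (hcs hy)), y, hy, rfl⟩
      obtain ⟨hm1, K0, hK0c, hK0m⟩ := Nat.sInf_mem hne
      refine ⟨K0, hcs hK0c, fun K hKc => ?_⟩
      rcases hc.total hK0c hKc with h | h
      · have hKi : K.index ≠ 0 := hidx K (hcs hKc)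
        have hdvd := Subgroup.index_dvd_of_le h
        have hge : sInf {n : ℕ | 0 < n ∧ ∃ K ∈ c, (K : Subgroup G).index = n} ≤ K.index :=
          Nat.sInf_le ⟨Nat.pos_of_ne_zero hKi, K, hKc, rfl⟩
        have hpos : 0 < K0.index := Nat.pos_of_ne_zero (hidx K0 (hcs hK0c))
        have hle1 : K.index ≤ K0.index := Nat.le_of_dvd hpos hdvd
        have hle2 : K0.index ≤ K.index := by rw [hK0m]; exact hge
        have heq : K.index = K0.index := le_antisymm hle1 hle2
        have hmul := Subgroup.relIndex_mul_index h
        have h1 : K0.relIndex K = 1 :=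
          Nat.eq_of_mul_eq_mul_right (Nat.pos_of_ne_zero hKi)
            (by rw [hmul, one_mul, heq])
        exact Subgroup.relIndex_eq_one.mp h1
      · exact h)
    H hmem
  refine ⟨M, ⟨hMmem.2, fun K hMK => ?_⟩, hHM⟩
  by_contra hKne
  exact hMK.ne (le_antisymm hMK.le (hMmax ⟨hHM.trans hMK.le, hKne⟩ hMK.le))

theorem cover_iff_quotient_by_frattini_sub
    {G : Type*} [Group G] (N : Subgroup G) [hN : N.Normal]
    (hfr : N ≤ frattini G) (k : ℕ) :
    (∃ H : Fin k → Subgroup G,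
      (∀ i, H i ≠ ⊤) ∧ (⋃ i, (H i : Set G)) = Set.univ) ↔
    (∃ K : Fin k → Subgroup (G ⧸ N),
      (∀ i, K i ≠ ⊤) ∧ (⋃ i, (K i : Set (G ⧸ N))) = Set.univ) := by
  classical
  constructor
  · rintro ⟨H, hne, hcov⟩
    -- view the cover as a coset cover and discard infinite-index subgroups
    have hcovers : ⋃ i ∈ (Finset.univ : Finset (Fin k)),
        (1 : G) • ((H i : Subgroup G) : Set G) = Set.univ := by
      simpa using hcov
    have hfilter := Subgroup.leftCoset_cover_filter_FiniteIndex
      (s := Finset.univ) (g := fun _ => (1 : G)) (H := H) hcovers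
    -- for finite-index H i, the image in G ⧸ N is proper
    have key : ∀ i, (H i).FiniteIndex → (H i).map (QuotientGroup.mk' N) ≠ ⊤ := by
      intro i hfi htop
      obtain ⟨M, hM, hHM⟩ := exists_coatom_of_finiteIndex (H i) (hne i)
        hfi.index_ne_zero
      have hNM : N ≤ M := hfr.trans (frattini_le_coatom hM)
      have : Subgroup.comap (QuotientGroup.mk' N) ((H i).map (QuotientGroup.mk' N)) = ⊤ := by
        rw [htop]; exact Subgroup.comap_top _
      rw [Subgroup.comap_map_eq, QuotientGroup.ker_mk'] at this
      exact hM.1 (top_le_iff.mp (this ▸ sup_le hHM hNM))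
    -- the quotient is nontrivial
    have hbot : (⊥ : Subgroup (G ⧸ N)) ≠ ⊤ := by
      obtain ⟨i, _, hfi⟩ := Subgroup.exists_finiteIndex_of_leftCoset_cover
        (s := Finset.univ) (g := fun _ => (1 : G)) (H := H) hcovers
      obtain ⟨M, hM, hHM⟩ := exists_coatom_of_finiteIndex (H i) (hne i) hfi.index_ne_zero
      intro h
      have hNtop : N = ⊤ := by
        rw [Subgroup.eq_top_iff']
        intro g
        have hg : QuotientGroup.mk g ∈ (⊥ : Subgroup (G ⧸ N)) := h ▸ Subgroup.mem_top _
        exact (QuotientGroup.eq_one_iff g).mp (Subgroup.mem_bot.mp hg)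
      exact hM.1 (top_le_iff.mp (hNtop ▸ hfr.trans (frattini_le_coatom hM)))
    refine ⟨fun i => if (H i).FiniteIndex then (H i).map (QuotientGroup.mk' N) else ⊥,
      fun i => ?_, ?_⟩
    · by_cases hfi : (H i).FiniteIndex
      · simpa only [if_pos hfi] using key i hfi
      · simpa only [if_neg hfi] using hbot
    · apply Set.eq_univ_of_forall
      intro x
      obtain ⟨g, rfl⟩ := QuotientGroup.mk'_surjective N x
      have hg : g ∈ ⋃ j ∈ Finset.filter (fun i => (H i).FiniteIndex) Finset.univ,
          (1 : G) • ((H j : Subgroup G) : Set G) := hfilter ▸ Set.mem_univ g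
      simp only [Set.mem_iUnion, one_smul] at hg
      obtain ⟨i, hi, hgi⟩ := hg
      have hfi : (H i).FiniteIndex := (Finset.mem_filter.mp hi).2
      refine Set.mem_iUnion.mpr ⟨i, ?_⟩
      simp only [hfi, if_pos]
      exact ⟨g, hgi, rfl⟩
  · rintro ⟨K, hne, hcov⟩
    refine ⟨fun i => (K i).comap (QuotientGroup.mk' N), fun i h => ?_, ?_⟩
    · apply hne i
      replace h : (K i).comap (QuotientGroup.mk' N) = ⊤ := h
      have := congrArg (Subgroup.map (QuotientGroup.mk' N)) h
      rwa [Subgroup.map_comap_eq_self_of_surjective (QuotientGroup.mk'_surjective N),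
        Subgroup.map_top_of_surjective _ (QuotientGroup.mk'_surjective N)] at this
    · apply Set.eq_univ_of_forall
      intro g
      have : ((QuotientGroup.mk' N) g) ∈ ⋃ i, (K i : Set (G ⧸ N)) :=
        hcov ▸ Set.mem_univ _
      obtain ⟨i, hi⟩ := Set.mem_iUnion.mp this
      exact Set.mem_iUnion.mpr ⟨i, hi⟩
end

section
/- The dihedral group D₂ₙ of order 2n (n ≥ 2) can be covered by p + 1 proper subgroups but not by p proper subgroups, where p is the minimal prime factor of n. -/
open DihedralGroup Finset

lemma dc_aux {n : ℕ} [NeZero n] (K : Subgroup (DihedralGroup n)) (hK : K ≠ ⊤)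
    {a : ZMod n} (ha : sr a ∈ K) [DecidablePred (· ∈ K)] :
    (Finset.univ.filter fun x : ZMod n => DihedralGroup.r x ∈ K).card * n.minFac ≤ n ∧
    (Finset.univ.filter fun x : ZMod n => DihedralGroup.sr x ∈ K).card =
      (Finset.univ.filter fun x : ZMod n => DihedralGroup.r x ∈ K).card := by
  have hzero : DihedralGroup.r (0 : ZMod n) ∈ K := by
    rw [← DihedralGroup.one_def]; exact K.one_mem
  set T : AddSubgroup (ZMod n) :=
    { carrier := {x | DihedralGroup.r x ∈ K}
      zero_mem' := hzero
      add_mem' := fun {x y} hx hy => by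
        have := K.mul_mem hx hy
        simpa using this
      neg_mem' := fun {x} hx => by
        have := K.inv_mem hx
        have h : (DihedralGroup.r x)⁻¹ = DihedralGroup.r (-x) := rfl
        rwa [h] at this } with hT
  have hmemT : ∀ x : ZMod n, x ∈ T ↔ DihedralGroup.r x ∈ K := fun x => Iff.rfl
  have hTne : T ≠ ⊤ := by
    intro htop
    apply hK
    rw [Subgroup.eq_top_iff']
    rintro (b | b)
    · exact (hmemT b).mp (htop ▸ AddSubgroup.mem_top b)
    · have hb : DihedralGroup.r (b - a) ∈ K := (hmemT _).mp (htop ▸ AddSubgroup.mem_top _)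
      have : sr a * DihedralGroup.r (b - a) = sr b := by
        rw [sr_mul_r]; ring_nf
      simpa [this] using K.mul_mem ha hb
  have hdvd : Nat.card T ∣ n := by
    simpa [Nat.card_zmod] using AddSubgroup.card_addSubgroup_dvd_card T
  classical
  have hcardT : Nat.card T = (Finset.univ.filter fun x : ZMod n => DihedralGroup.r x ∈ K).card := by
    rw [Nat.card_eq_fintype_card, Fintype.card_subtype]
    congr 1
    exact Finset.filter_congr fun x _ => hmemT x
  have hlt : Nat.card T < n := by
    obtain ⟨x, hx⟩ : ∃ x, x ∉ T := by
      by_contra h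
      push_neg at h
      exact hTne (AddSubgroup.eq_top_iff' T |>.mpr h)
    have hsub : (Finset.univ.filter fun y : ZMod n => DihedralGroup.r y ∈ K) ⊂ Finset.univ := by
      refine Finset.ssubset_univ_iff.mpr ?_
      intro h
      have : x ∈ Finset.univ.filter fun y : ZMod n => DihedralGroup.r y ∈ K := by
        rw [h]; exact Finset.mem_univ x
      exact hx ((hmemT x).mpr (Finset.mem_filter.mp this).2)
    calc Nat.card T = _ := hcardT
      _ < Finset.univ.card := Finset.card_lt_card hsub
      _ = n := by simp [ZMod.card]
  have hmul : Nat.card T * n.minFac ≤ n := by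
    obtain ⟨k, hk⟩ := hdvd
    have hk2 : 2 ≤ k := by
      rcases Nat.lt_or_ge k 2 with h | h
      · interval_cases k <;> omega
      · exact h
    have : n.minFac ≤ k := Nat.minFac_le_of_dvd hk2 ⟨Nat.card T, hk.trans (Nat.mul_comm _ _)⟩
    calc Nat.card T * n.minFac ≤ Nat.card T * k := Nat.mul_le_mul_left _ this
      _ = n := hk.symm
  constructor
  · rwa [hcardT] at hmul
  · have himg : (Finset.univ.filter fun x : ZMod n => DihedralGroup.sr x ∈ K)
        = (Finset.univ.filter fun x : ZMod n => DihedralGroup.r x ∈ K).image (· + a) := by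
      ext x
      simp only [Finset.mem_image, Finset.mem_filter, Finset.mem_univ, true_and]
      constructor
      · intro hx
        refine ⟨x - a, ?_, by ring⟩
        have : sr a * sr x = DihedralGroup.r (x - a) := by rw [sr_mul_sr]
        rw [← this]; exact K.mul_mem ha hx
      · rintro ⟨y, hy, rfl⟩
        have : sr a * DihedralGroup.r y = sr (a + y) := by rw [sr_mul_r]
        have h2 : sr (a + y) ∈ K := this ▸ K.mul_mem ha hy
        rwa [add_comm] at h2
    rw [himg, Finset.card_image_of_injective _ (add_left_injective a)]

theorem dihedral_cover_number (n : ℕ) (hn : 2 ≤ n) :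
    (∃ H : Fin (n.minFac + 1) → Subgroup (DihedralGroup n),
      (∀ i, H i ≠ ⊤) ∧ (⋃ i, (H i : Set (DihedralGroup n))) = Set.univ) ∧
    ¬ ∃ H : Fin n.minFac → Subgroup (DihedralGroup n),
      (∀ i, H i ≠ ⊤) ∧ (⋃ i, (H i : Set (DihedralGroup n))) = Set.univ := by
  classical
  haveI : NeZero n := ⟨by omega⟩
  have hpprime : n.minFac.Prime := Nat.minFac_prime (by omega)
  have hp2 : 2 ≤ n.minFac := hpprime.two_le
  have hpn : n.minFac ∣ n := Nat.minFac_dvd n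
  have hple : n.minFac ≤ n := Nat.le_of_dvd (by omega) hpn
  haveI : NeZero n.minFac := ⟨by omega⟩
  haveI : Fact (1 < n.minFac) := ⟨hp2⟩
  constructor
  · -- construction of a cover by p + 1 proper subgroups
    set f : ZMod n →+* ZMod n.minFac := ZMod.castHom hpn (ZMod n.minFac) with hf
    set R : Subgroup (DihedralGroup n) :=
      { carrier := {x | ∃ i, x = DihedralGroup.r i}
        one_mem' := ⟨0, rfl⟩
        mul_mem' := by rintro _ _ ⟨i, rfl⟩ ⟨j, rfl⟩; exact ⟨i + j, rfl⟩
        inv_mem' := by rintro _ ⟨i, rfl⟩; exact ⟨-i, rfl⟩ } with hR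
    set K : ZMod n.minFac → Subgroup (DihedralGroup n) := fun c =>
      { carrier := {x | (∃ i, x = DihedralGroup.r i ∧ f i = 0) ∨
          (∃ i, x = DihedralGroup.sr i ∧ f i = c)}
        one_mem' := Or.inl ⟨0, rfl, map_zero f⟩
        mul_mem' := by
          rintro _ _ (⟨i, rfl, hi⟩ | ⟨i, rfl, hi⟩) (⟨j, rfl, hj⟩ | ⟨j, rfl, hj⟩)
          · exact Or.inl ⟨i + j, rfl, by rw [map_add, hi, hj, add_zero]⟩
          · exact Or.inr ⟨j - i, rfl, by rw [map_sub, hi, hj, sub_zero]⟩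
          · exact Or.inr ⟨i + j, rfl, by rw [map_add, hi, hj, add_zero]⟩
          · exact Or.inl ⟨j - i, rfl, by rw [map_sub, hi, hj, sub_self]⟩
        inv_mem' := by
          rintro _ (⟨i, rfl, hi⟩ | ⟨i, rfl, hi⟩)
          · exact Or.inl ⟨-i, rfl, by rw [map_neg, hi, neg_zero]⟩
          · exact Or.inr ⟨i, rfl, hi⟩ } with hKdef
    refine ⟨fun i => if h : (i : ℕ) < n.minFac then K (((i : ℕ) : ZMod n.minFac)) else R, ?_, ?_⟩
    · intro i
      by_cases h : (i : ℕ) < n.minFac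
      · simp only [dif_pos h]
        intro htop
        have hmem : DihedralGroup.r (1 : ZMod n) ∈ K (((i : ℕ) : ZMod n.minFac)) :=
          htop ▸ Subgroup.mem_top _
        rcases hmem with ⟨j, hj, hj0⟩ | ⟨j, hj, _⟩
        · have hij : (1 : ZMod n) = j := by injection hj
          rw [← hij, map_one] at hj0
          exact one_ne_zero hj0
        · exact absurd hj (by simp)
      · simp only [dif_neg h]
        intro htop
        have hmem : DihedralGroup.sr (0 : ZMod n) ∈ R := htop ▸ Subgroup.mem_top _
        obtain ⟨j, hj⟩ := hmem
        exact absurd hj (by simp)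
    · refine Set.eq_univ_iff_forall.mpr fun x => Set.mem_iUnion.mpr ?_
      rcases x with i | i
      · refine ⟨⟨n.minFac, by omega⟩, ?_⟩
        have : ¬ ((⟨n.minFac, by omega⟩ : Fin (n.minFac + 1)) : ℕ) < n.minFac := by simp
        simp only [dif_neg this]
        exact ⟨i, rfl⟩
      · refine ⟨⟨(f i).val, by have := ZMod.val_lt (f i); omega⟩, ?_⟩
        have hlt : ((⟨(f i).val, by have := ZMod.val_lt (f i); omega⟩ :
            Fin (n.minFac + 1)) : ℕ) < n.minFac := ZMod.val_lt (f i)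
        simp only [dif_pos hlt]
        refine Or.inr ⟨i, rfl, ?_⟩
        simp [ZMod.natCast_val, ZMod.cast_id]
  · -- no cover by p proper subgroups
    rintro ⟨H, hHne, hcover⟩
    have hcov : ∀ x : DihedralGroup n, ∃ i, x ∈ H i := fun x => by
      have hx : x ∈ ⋃ i, (H i : Set (DihedralGroup n)) := hcover ▸ Set.mem_univ x
      simpa [Set.mem_iUnion] using hx
    set A : Fin n.minFac → Finset (ZMod n) :=
      fun i => Finset.univ.filter fun x => DihedralGroup.sr x ∈ H i with hA
    set B : Fin n.minFac → Finset (ZMod n) :=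
      fun i => Finset.univ.filter fun x => DihedralGroup.r x ∈ H i with hB
    have hcovB : ∀ x : ZMod n, ∃ i, x ∈ B i := fun x => by
      obtain ⟨i, hi⟩ := hcov (DihedralGroup.r x)
      exact ⟨i, by simp [hB, hi]⟩
    have h0B : ∀ i, (0 : ZMod n) ∈ B i := fun i => by
      have : DihedralGroup.r (0 : ZMod n) ∈ H i := by
        rw [← DihedralGroup.one_def]; exact (H i).one_mem
      simp [hB, this]
    obtain ⟨q, hq⟩ : ∃ q, n = n.minFac * q := hpn
    have hq1 : 1 ≤ q := by
      rcases Nat.eq_zero_or_pos q with h | h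
      · subst h; simp at hq; omega
      · exact h
    by_cases hall : ∀ i, ∃ a, DihedralGroup.sr a ∈ H i
    · have hble : ∀ i, (B i).card ≤ q := fun i => by
        obtain ⟨a, ha⟩ := hall i
        have h1 := (dc_aux (H i) (hHne i) ha).1
        have h3 : n.minFac * (B i).card ≤ n.minFac * q :=
          le_of_le_of_eq (by rw [Nat.mul_comm]; exact h1) hq
        exact Nat.le_of_mul_le_mul_left h3 (by omega)
      have hsub : (Finset.univ : Finset (ZMod n)) ⊆
          insert (0 : ZMod n) (Finset.univ.biUnion fun i => B i \ {0}) := by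
        intro x _
        by_cases hx : x = 0
        · simp [hx]
        · obtain ⟨i, hi⟩ := hcovB x
          exact Finset.mem_insert_of_mem (Finset.mem_biUnion.mpr
            ⟨i, Finset.mem_univ i, Finset.mem_sdiff.mpr ⟨hi, by simp [hx]⟩⟩)
      obtain ⟨q', hq'⟩ : ∃ q', q = q' + 1 := ⟨q - 1, by omega⟩
      have hcard : n ≤ 1 + n.minFac * q' := by
        calc n = (Finset.univ : Finset (ZMod n)).card := by simp [ZMod.card]
          _ ≤ (insert (0 : ZMod n) (Finset.univ.biUnion fun i => B i \ {0})).card :=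
              Finset.card_le_card hsub
          _ ≤ (Finset.univ.biUnion fun i => B i \ {0}).card + 1 := Finset.card_insert_le _ _
          _ ≤ (∑ i : Fin n.minFac, (B i \ {0}).card) + 1 :=
              Nat.add_le_add_right (Finset.card_biUnion_le) 1
          _ ≤ (∑ _i : Fin n.minFac, q') + 1 := by
              refine Nat.add_le_add_right (Finset.sum_le_sum fun i _ => ?_) 1
              have h1 : (B i \ {0}).card = (B i).card - 1 := by
                rw [Finset.card_sdiff_of_subset (by simpa using h0B i), Finset.card_singleton]
              rw [h1]
              have := hble i
              omega
          _ = n.minFac * q' + 1 := by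
              rw [Finset.sum_const, Finset.card_univ, Fintype.card_fin, smul_eq_mul]
          _ = 1 + n.minFac * q' := by omega
      have hn2 : n = n.minFac * q' + n.minFac := hq.trans (by rw [hq']; ring)
      set m := n.minFac * q'
      omega
    · push_neg at hall
      obtain ⟨i₀, hi₀⟩ := hall
      have hAi₀ : A i₀ = ∅ := by
        rw [hA]
        simp only [Finset.filter_eq_empty_iff]
        intro x _
        exact hi₀ x
      have hale : ∀ i, (A i).card ≤ q := fun i => by
        by_cases hex : ∃ a, DihedralGroup.sr a ∈ H i
        · obtain ⟨a, ha⟩ := hex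
          have h2 : (A i).card = (B i).card := (dc_aux (H i) (hHne i) ha).2
          have h1 : (B i).card * n.minFac ≤ n := (dc_aux (H i) (hHne i) ha).1
          have h3 : n.minFac * (A i).card ≤ n.minFac * q :=
            le_of_le_of_eq (by rw [Nat.mul_comm, h2]; exact h1) hq
          exact Nat.le_of_mul_le_mul_left h3 (by omega)
        · push_neg at hex
          have : A i = ∅ := by
            rw [hA]; simp only [Finset.filter_eq_empty_iff]; intro x _; exact hex x
          simp [this]
      have hcovA : (Finset.univ : Finset (ZMod n)) ⊆ Finset.univ.biUnion A := by
        intro x _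
        obtain ⟨i, hi⟩ := hcov (DihedralGroup.sr x)
        exact Finset.mem_biUnion.mpr ⟨i, Finset.mem_univ i, by simp [hA, hi]⟩
      obtain ⟨p', hp'⟩ : ∃ p', n.minFac = p' + 1 := ⟨n.minFac - 1, by omega⟩
      have hcard : n ≤ p' * q := by
        calc n = (Finset.univ : Finset (ZMod n)).card := by simp [ZMod.card]
          _ ≤ (Finset.univ.biUnion A).card := Finset.card_le_card hcovA
          _ ≤ ∑ i : Fin n.minFac, (A i).card := Finset.card_biUnion_le
          _ = ∑ i ∈ Finset.univ.erase i₀, (A i).card := by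
              rw [Finset.sum_erase _ (by rw [hAi₀]; simp)]
          _ ≤ ∑ _i ∈ Finset.univ.erase i₀, q := Finset.sum_le_sum fun i _ => hale i
          _ = p' * q := by
              rw [Finset.sum_const, Finset.card_erase_of_mem (Finset.mem_univ i₀),
                Finset.card_univ, Fintype.card_fin, smul_eq_mul, hp']
              simp
      have hn2 : n = p' * q + q := hq.trans (by rw [hp']; ring)
      set m := p' * q
      omega
end

section
/- Let V be a vector space of dimension at least 2 over a finite field F with |F| = q. Then V can be covered by q + 1 proper subspaces, but cannot be covered by q proper subspaces. -/
/-!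
Write `q = |F|`. A surjection `V → F²` exists once `dim V ≥ 2`, and pulling back the `q + 1`
lines of the plane `F²` gives a cover by `q + 1` proper subspaces.

Conversely, take a cover by proper subspaces that is irredundant, pick `x` lying only in the
member `p`, and `y ∉ p`. The `q` points `y + t • x` avoid `p`, and any other member contains at
most one of them (otherwise it would contain `x`), so there are at least `q` further members.
-/

open Set

namespace Submodule

variable {K E ι : Type*}

section DivisionRing

variable [DivisionRing K] [AddCommGroup E] [Module K E]

def IsProperCover (p : ι → Submodule K E) : Prop :=
  (∀ i, p i ≠ ⊤) ∧ ⋃ i, (p i : Set E) = univ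

theorem IsProperCover.comp_equiv {ι' : Type*} {p : ι → Submodule K E} (h : IsProperCover p)
    (e : ι' ≃ ι) : IsProperCover (p ∘ e) :=
  ⟨fun i => h.1 (e i), (e.surjective.iUnion_comp fun i => (p i : Set E)).trans h.2⟩

theorem IsProperCover.comap {F : Type*} [AddCommGroup F] [Module K F] {p : ι → Submodule K F}
    (h : IsProperCover p) {f : E →ₗ[K] F} (hf : Function.Surjective f) :
    IsProperCover fun i => (p i).comap f := by
  refine ⟨fun i (htop : (p i).comap f = ⊤) => h.1 i ?_, ?_⟩
  · rw [← map_comap_eq_of_surjective hf (p i), htop, map_top, LinearMap.range_eq_top.mpr hf]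
  · simp only [comap_coe, ← preimage_iUnion, h.2, preimage_univ]

theorem setOf_add_smul_mem_subsingleton {p : Submodule K E} {x : E} (hx : x ∉ p) (y : E) :
    {t : K | y + t • x ∈ p}.Subsingleton := by
  intro t ht t' ht'
  by_contra hne
  have hdiff : (t - t') • x ∈ p := by
    simpa [sub_smul] using p.sub_mem ht ht'
  exact hx ((p.smul_mem_iff (sub_ne_zero.mpr hne)).mp hdiff)

theorem card_le_card_of_forall_add_smul_mem [Fintype K] {p : ι → Submodule K E} {s : Finset ι}
    {x y : E} (hx : ∀ i ∈ s, x ∉ p i) (hline : ∀ t : K, ∃ i ∈ s, y + t • x ∈ p i) :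
    Fintype.card K ≤ s.card := by
  choose f hfs hf using hline
  refine Finset.card_le_card_of_injOn f (fun t _ => hfs t) fun t _ t' _ h => ?_
  exact setOf_add_smul_mem_subsingleton (hx _ (hfs t)) y (hf t) (h ▸ hf t')

theorem card_lt_card_of_biUnion_eq_univ [Fintype K] {p : ι → Submodule K E} (s : Finset ι)
    (hp : ∀ i ∈ s, p i ≠ ⊤) (hcov : ⋃ i ∈ s, (p i : Set E) = univ) :
    Fintype.card K < s.card := by
  classical
  induction s using Finset.strongInduction with
  | H s ih =>
  by_cases hred : ∃ i ∈ s, ⋃ j ∈ s.erase i, (p j : Set E) = univ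
  · obtain ⟨i, hi, hcov'⟩ := hred
    exact (ih _ (Finset.erase_ssubset hi) (fun j hj => hp j (Finset.mem_of_mem_erase hj))
      hcov').trans (Finset.card_erase_lt_of_mem hi)
  push Not at hred
  have hmem (v : E) : ∃ i ∈ s, v ∈ p i := by simpa using hcov.ge (mem_univ v)
  obtain ⟨i, hi, -⟩ := hmem 0
  obtain ⟨x, hx⟩ := (ne_univ_iff_exists_notMem _).mp (hred i hi)
  simp only [mem_iUnion, SetLike.mem_coe, not_exists] at hx
  have hxi : x ∈ p i := by
    obtain ⟨j, hj, hxj⟩ := hmem x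
    obtain rfl | hji := eq_or_ne j i
    · exact hxj
    · exact absurd hxj (hx j (Finset.mem_erase.mpr ⟨hji, hj⟩))
  obtain ⟨y, hy⟩ := SetLike.exists_not_mem_of_ne_top (p i) (hp i hi)
  refine lt_of_le_of_lt ?_ (Finset.card_erase_lt_of_mem hi)
  refine card_le_card_of_forall_add_smul_mem (y := y) hx fun t => ?_
  obtain ⟨j, hj, hyt⟩ := hmem (y + t • x)
  refine ⟨j, Finset.mem_erase.mpr ⟨?_, hj⟩, hyt⟩
  rintro rfl
  exact hy (by simpa using (p j).sub_mem hyt ((p j).smul_mem t hxi))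

theorem IsProperCover.card_lt [Fintype K] [Fintype ι] {p : ι → Submodule K E}
    (h : IsProperCover p) : Fintype.card K < Fintype.card ι :=
  card_lt_card_of_biUnion_eq_univ Finset.univ (fun i _ => h.1 i) (by simpa using h.2)

theorem exists_linearMap_surjective_of_le_rank {n : ℕ} (hn : n ≤ Module.rank K E) :
    ∃ f : E →ₗ[K] (Fin n → K), Function.Surjective f := by
  obtain ⟨g, hg⟩ := Module.le_rank_iff_exists_linearMap.mp hn
  obtain ⟨f, hf⟩ := g.exists_leftInverse_of_injective (LinearMap.ker_eq_bot.mpr hg)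
  exact ⟨f, fun v => ⟨g v, LinearMap.congr_fun hf v⟩⟩

end DivisionRing

section Field

variable [Field K] [AddCommGroup E] [Module K E]

def planeLineEquation : Option K → (Fin 2 → K) →ₗ[K] K
  | none => LinearMap.proj 1
  | some t => LinearMap.proj 0 - t • LinearMap.proj 1

theorem isProperCover_ker_planeLineEquation :
    IsProperCover fun o : Option K => LinearMap.ker (planeLineEquation o) := by
  refine ⟨fun o htop => ?_, eq_univ_of_forall fun v => ?_⟩
  · have hzero := LinearMap.ker_eq_top.mp htop
    cases o with
    | none => simpa [planeLineEquation] using LinearMap.congr_fun hzero (Pi.single 1 1)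
    | some t => simpa [planeLineEquation] using LinearMap.congr_fun hzero (Pi.single 0 1)
  · simp only [mem_iUnion, SetLike.mem_coe, LinearMap.mem_ker]
    by_cases hv : v 1 = 0
    · exact ⟨none, hv⟩
    · exact ⟨some (v 0 / v 1), by simp [planeLineEquation, hv]⟩

theorem exists_isProperCover_of_two_le_rank [Fintype K] (h : 2 ≤ Module.rank K E) :
    ∃ p : Fin (Fintype.card K + 1) → Submodule K E, IsProperCover p := by
  obtain ⟨f, hf⟩ := exists_linearMap_surjective_of_le_rank (n := 2) (by exact_mod_cast h)
  exact ⟨_, (isProperCover_ker_planeLineEquation.comap hf).comp_equiv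
    (Fintype.equivFinOfCardEq (Fintype.card_option (α := K))).symm⟩

end Field

end Submodule

open Submodule in
theorem vector_space_cover_number
    {F V : Type*} [Field F] [Fintype F] [AddCommGroup V] [Module F V]
    (hdim : 2 ≤ Module.rank F V) :
    (∃ W : Fin (Fintype.card F + 1) → Submodule F V,
      (∀ i, W i ≠ ⊤) ∧ (⋃ i, (W i : Set V)) = Set.univ) ∧
    ¬ ∃ W : Fin (Fintype.card F) → Submodule F V,
      (∀ i, W i ≠ ⊤) ∧ (⋃ i, (W i : Set V)) = Set.univ := by
  refine ⟨exists_isProperCover_of_two_le_rank hdim, fun ⟨W, hW⟩ => ?_⟩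
  simpa using IsProperCover.card_lt (p := W) hW
end

section
/- A field F cannot be covered by finitely many proper subfields: if F = F₁ ∪ ⋯ ∪ Fₖ where each Fᵢ is a subfield of F, then some Fᵢ = F. Equivalently, for every coloring of the elements of F in finitely many colors, some color class generates F as a field. -/
/-!
A finite field is generated by a generator of its cyclic unit group, and whichever subfield
contains that generator is everything. For an infinite field, B. H. Neumann's lemma says that
one of the subfields `L` has finite index in the additive group. If `L` were proper, then for
`x ∉ L` the map `a ↦ a * x` would embed `L` into `F ⧸ L`, so `L`, and with it `F`, would be finite.
-/

namespace Subfield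

variable {F : Type*} [Field F]

theorem eq_top_of_generator_mem {g : Fˣ} (hg : ∀ x, x ∈ Subgroup.zpowers g)
    {L : Subfield F} (hgL : (g : F) ∈ L) : L = ⊤ := by
  refine eq_top_iff.mpr fun x _ => ?_
  rcases eq_or_ne x 0 with rfl | hx
  · exact L.zero_mem
  · obtain ⟨n, hn⟩ := hg (Units.mk0 x hx)
    rw [← Units.val_mk0 hx, ← hn, Units.val_zpow_eq_zpow_val]
    exact zpow_mem hgL n

theorem finite_of_finiteIndex_of_ne_top (L : Subfield F) [L.toAddSubgroup.FiniteIndex]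
    (hL : L ≠ ⊤) : Finite L := by
  obtain ⟨x, -, hx⟩ := SetLike.exists_of_lt (lt_top_iff_ne_top.mpr hL)
  refine Finite.of_injective
    (fun a : L => (QuotientAddGroup.mk ((a : F) * x) : F ⧸ L.toAddSubgroup)) fun a b hab => ?_
  by_contra hne
  have hmul_mem : ((b : F) - a) * x ∈ L := by
    rw [sub_mul, sub_eq_neg_add]
    exact QuotientAddGroup.eq.mp hab
  have hsub_ne : (b : F) - a ≠ 0 := sub_ne_zero.mpr fun h => hne (Subtype.ext h).symm
  apply hx
  simpa [hsub_ne] using L.mul_mem (L.inv_mem (L.sub_mem b.2 a.2)) hmul_mem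

theorem eq_top_of_finiteIndex [Infinite F] (L : Subfield F) [L.toAddSubgroup.FiniteIndex] :
    L = ⊤ := by
  by_contra hL
  have : Finite L.toAddSubgroup := L.finite_of_finiteIndex_of_ne_top hL
  exact not_finite_iff_infinite.mpr ‹_› (Finite.of_addSubgroup_quotient L.toAddSubgroup)

end Subfield

theorem field_not_union_of_proper_subfields
    {F : Type*} [Field F] (k : ℕ) (K : Fin k → Subfield F)
    (hcover : (⋃ i, (K i : Set F)) = Set.univ) :
    ∃ i, K i = ⊤ := by
  rcases finite_or_infinite F with _ | _
  · obtain ⟨g, hg⟩ := IsCyclic.exists_generator (α := Fˣ)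
    obtain ⟨i, hi⟩ := Set.mem_iUnion.mp (hcover ▸ Set.mem_univ (g : F))
    exact ⟨i, Subfield.eq_top_of_generator_mem hg hi⟩
  · obtain ⟨i, -, hi⟩ := Submodule.exists_finiteIndex_of_cover
      (p := fun i => (K i).toAddSubgroup.toIntSubmodule) (s := Finset.univ) (by simpa using hcover)
    have : (K i).toAddSubgroup.FiniteIndex := hi
    exact ⟨i, (K i).eq_top_of_finiteIndex⟩
end
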